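/- With H = (Z/p)^s acting faithfully on V^# = kX ⊕ kY as in the unipotent triangular action (g_i fixes Y, sends X to X - μ_iY with μ_i 𝔽_p-linearly independent), for every n ≥ p^s there is an isomorphism of kH-modules S^n(V^#) ≅ kH ⊕ S^{n - p^s}(V^#). -/

import Mathlib

open MvPolynomial

/-- The `k`-algebra automorphism of `k[X,Y]` determined by `X ↦ X - cY`, `Y ↦ Y`
(we write `X = X 0`, `Y = X 1`). -/
noncomputable def substAct (k : Type*) [CommRing k] (c : k) :
    MvPolynomial (Fin 2) k →ₐ[k] MvPolynomial (Fin 2) k :=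
  aeval (fun j => if j = 0 then X 0 - C c * X 1 else X 1)

/-!
Let `λ_c = ∑ cᵢ μᵢ` for `c ∈ (ℤ/p)^s`; these are `p^s` distinct elements of `k`, and `gᵢ` acts on
them by `λ ↦ λ + μᵢ`. The orbit product `φ = ∏_c (X - λ_c Y)` of `X` is therefore `H`-invariant of
degree `p^s`, and its zeros in `ℙ¹` are the points `(λ_c : 1)`, permuted regularly by `H`.

The map `(a, b) ↦ Y^{n+1-p^s} a + φ b` from `S^{p^s-1} × S^{n-p^s}` to `Sⁿ` is `H`-equivariant.
It is injective: evaluating at the zeros of `φ` shows that `a`, a binary form of degree `p^s - 1`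
with `p^s` zeros, vanishes, and then `b = 0`. Comparing dimensions, it is an isomorphism. Finally,
evaluation at the points `(λ_c : 1)` identifies `S^{p^s-1}` with `k`-valued functions on `H`,
i.e. with the regular representation.
-/

section Dehomogenize

variable {R : Type*} [CommSemiring R]

lemma MvPolynomial.IsHomogeneous.natDegree_aeval_X_one_le {q : MvPolynomial (Fin 2) R} {m : ℕ}
    (hq : q.IsHomogeneous m) : (MvPolynomial.aeval ![(Polynomial.X : Polynomial R), 1] q).natDegree ≤ m := by
  rw [q.as_sum, map_sum]
  refine Polynomial.natDegree_sum_le_of_forall_le _ _ fun d hd => ?_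
  have hd0 : d 0 ≤ m := (hq.degree_eq_sum_deg_support hd) ▸ Finsupp.le_degree 0 d
  rw [aeval_monomial, Finsupp.prod_fintype _ _ (fun _ => pow_zero _), Fin.prod_univ_two]
  simp only [Matrix.cons_val_zero, Matrix.cons_val_one, one_pow, mul_one,
    ← Polynomial.C_eq_algebraMap]
  exact (Polynomial.natDegree_C_mul_X_pow_le _ _).trans hd0

lemma Polynomial.eval_aeval_X_one (q : MvPolynomial (Fin 2) R) (t : R) :
    (MvPolynomial.aeval ![Polynomial.X, 1] q).eval t = MvPolynomial.eval ![t, 1] q := by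
  have hpt : (fun i => Polynomial.aeval t (![(Polynomial.X : Polynomial R), 1] i)) = ![t, 1] := by
    funext i; fin_cases i <;> simp
  rw [← Polynomial.coe_aeval_eq_eval, ← AlgHom.comp_apply, comp_aeval, hpt]
  rfl

noncomputable def dehomogenizeEquiv (m : ℕ) :
    homogeneousSubmodule (Fin 2) R m ≃ₗ[R] Polynomial.degreeLT R (m + 1) where
  toFun q := ⟨aeval ![Polynomial.X, 1] q.1, Polynomial.mem_degreeLT.2 <|
    Polynomial.degree_le_natDegree.trans_lt <| WithBot.coe_lt_coe.2 <|
      Nat.lt_succ_of_le q.2.natDegree_aeval_X_one_le⟩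
  invFun p := ⟨p.1.homogenize m, Polynomial.isHomogeneous_homogenize _⟩
  left_inv q := Subtype.ext (Polynomial.homogenize_eq_of_isHomogeneous q.2 rfl)
  right_inv p := Subtype.ext <| Polynomial.aeval_homogenize_X_one _ <|
    Polynomial.natDegree_le_iff_degree_le.2 <|
      Polynomial.mem_degreeLE.1 ((Polynomial.degreeLT_succ_eq_degreeLE (R := R)) ▸ p.2)
  map_add' _ _ := Subtype.ext (map_add _ _ _)
  map_smul' _ _ := Subtype.ext (map_smul _ _ _)

instance (m : ℕ) : Module.Finite R (homogeneousSubmodule (Fin 2) R m) :=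
  Module.Finite.equiv (dehomogenizeEquiv m).symm

end Dehomogenize

lemma finrank_homogeneousSubmodule_fin_two {R : Type*} [CommRing R] [Nontrivial R] (m : ℕ) :
    Module.finrank R (homogeneousSubmodule (Fin 2) R m) = m + 1 := by
  rw [(dehomogenizeEquiv m).finrank_eq, (Polynomial.degreeLTEquiv R _).finrank_eq,
    Module.finrank_fin_fun]

lemma MvPolynomial.IsHomogeneous.eq_zero_of_forall_eval_eq_zero_of_lt_card {R : Type*}
    [CommRing R] [IsDomain R] {q : MvPolynomial (Fin 2) R} {m : ℕ} (hq : q.IsHomogeneous m)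
    {ι : Type*} [Fintype ι] {t : ι → R} (ht : Function.Injective t)
    (hcard : m < Fintype.card ι) (h : ∀ i, MvPolynomial.eval ![t i, 1] q = 0) : q = 0 := by
  have hdehom : MvPolynomial.aeval ![Polynomial.X, 1] q = 0 :=
    Polynomial.eq_zero_of_natDegree_lt_card_of_eval_eq_zero _ ht
      (fun i => (Polynomial.eval_aeval_X_one q (t i)).trans (h i))
      (hq.natDegree_aeval_X_one_le.trans_lt hcard)
  rw [← Polynomial.homogenize_eq_of_isHomogeneous hq hdehom, Polynomial.homogenize_zero]

section SubstAct

variable {R : Type*} [CommRing R]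

lemma substAct_X_one (c : R) : substAct R c (X 1) = X 1 := by
  simp [substAct]

lemma substAct_X_zero_sub (c a : R) :
    substAct R c (X 0 - C a * X 1) = X 0 - C (a + c) * X 1 := by
  simp only [substAct, aeval_eq_bind₁, map_sub, bind₁_X_right, ↓reduceIte, map_mul, algHom_C,
    algebraMap_eq, one_ne_zero, C_add]
  ring

lemma eval_substAct (c t : R) (f : MvPolynomial (Fin 2) R) :
    eval ![t, 1] (substAct R c f) = eval ![t - c, 1] f := by
  change aeval ![t, 1] (substAct R c f) = aeval ![t - c, 1] f
  rw [← AlgHom.comp_apply, substAct, comp_aeval]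
  congr 2
  funext j
  fin_cases j <;> simp

lemma MvPolynomial.IsHomogeneous.substAct {f : MvPolynomial (Fin 2) R} {m : ℕ}
    (hf : f.IsHomogeneous m) (c : R) : (substAct R c f).IsHomogeneous m :=
  one_mul m ▸ hf.aeval (n := 1) (fun j : Fin 2 => if j = 0 then X 0 - C c * X 1 else X 1)
    fun j => by
      fin_cases j
      exacts [(isHomogeneous_X _ _).sub ((isHomogeneous_X _ _).C_mul c), isHomogeneous_X _ _]

noncomputable def substActOn (c : R) (m : ℕ) :
    homogeneousSubmodule (Fin 2) R m →ₗ[R] homogeneousSubmodule (Fin 2) R m :=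
  (substAct R c).toLinearMap.restrict fun _ hf => MvPolynomial.IsHomogeneous.substAct hf c

lemma coe_substActOn (c : R) {m : ℕ} (q : homogeneousSubmodule (Fin 2) R m) :
    (substActOn c m q : MvPolynomial (Fin 2) R) = substAct R c q :=
  rfl

end SubstAct

section NodalForm

variable {R : Type*} [CommRing R] {ι : Type*} [Fintype ι] (t : ι → R)

noncomputable def nodalForm : MvPolynomial (Fin 2) R :=
  ∏ i, (X 0 - C (t i) * X 1)

lemma isHomogeneous_nodalForm : (nodalForm t).IsHomogeneous (Fintype.card ι) := by
  simpa [nodalForm] using IsHomogeneous.prod Finset.univ _ (fun _ => 1) fun i _ =>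
    (isHomogeneous_X R 0).sub ((isHomogeneous_X R 1).C_mul (t i))

lemma nodalForm_ne_zero [Nontrivial R] : nodalForm t ≠ 0 := by
  refine ne_zero_of_map (f := eval ![1, 0]) ?_
  simp [nodalForm, map_prod]

lemma eval_nodalForm (i : ι) : eval ![t i, 1] (nodalForm t) = 0 := by
  rw [nodalForm, map_prod]
  exact Finset.prod_eq_zero (Finset.mem_univ i) (by simp)

lemma substAct_nodalForm {c : R} (e : ι ≃ ι) (he : ∀ i, t (e i) = t i - c) :
    substAct R c (nodalForm t) = nodalForm t := by
  simp only [nodalForm, map_prod, substAct_X_zero_sub]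
  rw [← e.prod_comp]
  simp [he]

end NodalForm

section EvalAtNodes

variable {R : Type*} [CommRing R] {ι : Type*}

noncomputable def evalAtNodes (t : ι → R) (m : ℕ) : homogeneousSubmodule (Fin 2) R m →ₗ[R] ι → R :=
  LinearMap.pi fun i => (aeval ![t i, 1]).toLinearMap ∘ₗ (homogeneousSubmodule (Fin 2) R m).subtype

lemma evalAtNodes_substActOn (t : ι → R) (c : R) {m : ℕ} (q : homogeneousSubmodule (Fin 2) R m)
    (i : ι) : evalAtNodes t m (substActOn c m q) i = eval ![t i - c, 1] (q : MvPolynomial (Fin 2) R) :=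
  eval_substAct c (t i) q

lemma evalAtNodes_injective [IsDomain R] [Fintype ι] {t : ι → R} (ht : Function.Injective t)
    {m : ℕ} (hm : m < Fintype.card ι) : Function.Injective (evalAtNodes t m) :=
  (injective_iff_map_eq_zero _).2 fun q hq => Subtype.ext <|
    q.2.eq_zero_of_forall_eval_eq_zero_of_lt_card ht hm fun i => congrFun hq i

end EvalAtNodes

section Splitting

variable {k : Type*} [Field k] {ι : Type*} [Fintype ι] {t : ι → k} {N n : ℕ}

noncomputable def evalAtNodesEquiv (ht : Function.Injective t) (hN : Fintype.card ι = N)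
    (h0 : 0 < N) : homogeneousSubmodule (Fin 2) k (N - 1) ≃ₗ[k] ι → k :=
  (evalAtNodes t (N - 1)).linearEquivOfInjective (evalAtNodes_injective ht (by omega)) (by
    rw [finrank_homogeneousSubmodule_fin_two, Module.finrank_fintype_fun_eq_card]
    omega)

variable (t) in
noncomputable def nodalSplitting (hN : Fintype.card ι = N) (h0 : 0 < N) (hn : N ≤ n) :
    homogeneousSubmodule (Fin 2) k (N - 1) × homogeneousSubmodule (Fin 2) k (n - N) →ₗ[k]
      homogeneousSubmodule (Fin 2) k n :=
  LinearMap.codRestrict _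
    (LinearMap.mulLeft k (X 1 ^ (n + 1 - N)) ∘ₗ Submodule.subtype _ ∘ₗ LinearMap.fst _ _ _ +
      LinearMap.mulLeft k (nodalForm t) ∘ₗ Submodule.subtype _ ∘ₗ LinearMap.snd _ _ _)
    fun ab => by
      have hY := (isHomogeneous_X_pow (R := k) 1 (n + 1 - N)).mul ab.1.2
      have hφ := (isHomogeneous_nodalForm t).mul ab.2.2
      rw [show n + 1 - N + (N - 1) = n by omega] at hY
      rw [hN, show N + (n - N) = n by omega] at hφ
      exact hY.add hφ

lemma coe_nodalSplitting (hN : Fintype.card ι = N) (h0 : 0 < N) (hn : N ≤ n)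
    (ab : homogeneousSubmodule (Fin 2) k (N - 1) × homogeneousSubmodule (Fin 2) k (n - N)) :
    (nodalSplitting t hN h0 hn ab : MvPolynomial (Fin 2) k) =
      X 1 ^ (n + 1 - N) * ab.1.1 + nodalForm t * ab.2.1 :=
  rfl

lemma nodalSplitting_injective (ht : Function.Injective t) (hN : Fintype.card ι = N)
    (h0 : 0 < N) (hn : N ≤ n) : Function.Injective (nodalSplitting t hN h0 hn) := by
  refine (injective_iff_map_eq_zero _).2 fun ⟨a, b⟩ hab => ?_
  replace hab : X 1 ^ (n + 1 - N) * a.1 + nodalForm t * b.1 = 0 := congrArg Subtype.val hab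
  -- at the points `(tᵢ : 1)` the second summand vanishes and `Y = 1`
  have ha : a = 0 := Subtype.ext <|
    a.2.eq_zero_of_forall_eval_eq_zero_of_lt_card ht (by omega) fun i => by
      simpa [eval_nodalForm] using congrArg (eval ![t i, 1]) hab
  subst ha
  have hb : b.1 = 0 := by simpa [nodalForm_ne_zero] using hab
  exact Prod.ext rfl (Subtype.ext hb)

lemma substActOn_nodalSplitting {c : k} (hc : substAct k c (nodalForm t) = nodalForm t)
    (hN : Fintype.card ι = N) (h0 : 0 < N) (hn : N ≤ n)
    (ab : homogeneousSubmodule (Fin 2) k (N - 1) × homogeneousSubmodule (Fin 2) k (n - N)) :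
    substActOn c n (nodalSplitting t hN h0 hn ab) =
      nodalSplitting t hN h0 hn (substActOn c _ ab.1, substActOn c _ ab.2) := by
  apply Subtype.ext
  rw [coe_substActOn, coe_nodalSplitting, coe_nodalSplitting, map_add, map_mul, map_mul, map_pow,
    substAct_X_one, hc, coe_substActOn, coe_substActOn]

variable (t) in
noncomputable def nodalSplittingEquiv (ht : Function.Injective t) (hN : Fintype.card ι = N)
    (h0 : 0 < N) (hn : N ≤ n) :
    (homogeneousSubmodule (Fin 2) k (N - 1) × homogeneousSubmodule (Fin 2) k (n - N)) ≃ₗ[k]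
      homogeneousSubmodule (Fin 2) k n :=
  (nodalSplitting t hN h0 hn).linearEquivOfInjective (nodalSplitting_injective ht hN h0 hn) (by
    simp only [Module.finrank_prod, finrank_homogeneousSubmodule_fin_two]
    omega)

variable (t) in
noncomputable def nodalDecomposition (ht : Function.Injective t) (hN : Fintype.card ι = N)
    (h0 : 0 < N) (hn : N ≤ n) :
    homogeneousSubmodule (Fin 2) k n ≃ₗ[k] (ι → k) × homogeneousSubmodule (Fin 2) k (n - N) :=
  (nodalSplittingEquiv t ht hN h0 hn).symm ≪≫ₗ
    (evalAtNodesEquiv ht hN h0).prodCongr (LinearEquiv.refl _ _)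

lemma nodalDecomposition_substAct (ht : Function.Injective t) (hN : Fintype.card ι = N)
    (h0 : 0 < N) (hn : N ≤ n) {c : k} (e : ι ≃ ι) (he : ∀ i, t (e i) = t i - c)
    {f g : homogeneousSubmodule (Fin 2) k n}
    (hfg : substAct k c (f : MvPolynomial (Fin 2) k) = g) :
    (nodalDecomposition t ht hN h0 hn g).1 = (nodalDecomposition t ht hN h0 hn f).1 ∘ e ∧
      ((nodalDecomposition t ht hN h0 hn g).2 : MvPolynomial (Fin 2) k) =
        substAct k c (nodalDecomposition t ht hN h0 hn f).2 := by
  set ψ := nodalSplittingEquiv t ht hN h0 hn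
  set ab := ψ.symm f
  have hg : ψ.symm g = (substActOn c _ ab.1, substActOn c _ ab.2) := by
    rw [LinearEquiv.symm_apply_eq]
    refine Subtype.ext (hfg.symm.trans ?_)
    rw [← coe_substActOn, ← ψ.apply_symm_apply f]
    exact congrArg Subtype.val (substActOn_nodalSplitting (substAct_nodalForm t e he) hN h0 hn ab)
  refine ⟨funext fun i => ?_, ?_⟩
  · change evalAtNodes t _ (ψ.symm g).1 i = evalAtNodes t _ ab.1 (e i)
    rw [hg, evalAtNodes_substActOn, ← he]
    rfl
  · change ((ψ.symm g).2 : MvPolynomial (Fin 2) k) = substAct k c ab.2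
    rw [hg, coe_substActOn]

end Splitting

section ElementaryAbelian

variable {p : ℕ} {k : Type*} [Field k] [CharP k p] {s : ℕ}

variable (p) in
/-- `∏ gᵢ^{cᵢ} ∈ H` acts by `X ↦ X - (translation p μ c) Y`. -/
noncomputable def translation (μ : Fin s → k) : (Fin s → ZMod p) →+ k where
  toFun c := ∑ i, ZMod.castHom (dvd_refl p) k (c i) * μ i
  map_zero' := by simp
  map_add' c c' := by simp [add_mul, Finset.sum_add_distrib]

lemma translation_injective {μ : Fin s → k}
    (hμ : ∀ c : Fin s → ZMod p, ∑ i, ZMod.castHom (dvd_refl p) k (c i) * μ i = 0 → c = 0) :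
    Function.Injective (translation p μ) :=
  (injective_iff_map_eq_zero _).2 hμ

lemma translation_single (μ : Fin s → k) (i : Fin s) : translation p μ (Pi.single i 1) = μ i := by
  simp [translation, Pi.single_apply, apply_ite (ZMod.cast : ZMod p → k)]

end ElementaryAbelian

theorem symmetric_power_splits_general (p : ℕ) [Fact p.Prime]
    (k : Type*) [Field k] [CharP k p] (s : ℕ) (μ : Fin s → k)
    (hμ : ∀ c : Fin s → ZMod p,
      ∑ i, ZMod.castHom (dvd_refl p) k (c i) * μ i = 0 → c = 0)
    (n : ℕ) (hn : p ^ s ≤ n) :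
    ∃ e : homogeneousSubmodule (Fin 2) k n ≃ₗ[k]
        ((Fin s → ZMod p) → k) × homogeneousSubmodule (Fin 2) k (n - p ^ s),
      ∀ i : Fin s, ∀ f g : homogeneousSubmodule (Fin 2) k n,
        substAct k (μ i) (f : MvPolynomial (Fin 2) k) = (g : MvPolynomial (Fin 2) k) →
          ((e g).1 = fun x => (e f).1 (x - Pi.single i 1)) ∧
          ((e g).2 : MvPolynomial (Fin 2) k) =
            substAct k (μ i) ((e f).2 : MvPolynomial (Fin 2) k) := by
  have hcard : Fintype.card (Fin s → ZMod p) = p ^ s := by simp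
  have hpos : 0 < p ^ s := pow_pos (Fact.out : p.Prime).pos s
  refine ⟨nodalDecomposition _ (translation_injective hμ) hcard hpos hn, fun i f g hfg => ?_⟩
  exact nodalDecomposition_substAct _ hcard hpos hn (Equiv.subRight (Pi.single i 1))
    (fun c => by simp [translation_single]) hfg

/-- With `H = (ℤ/p)^s` acting faithfully on `V^# = kX ⊕ kY` by the
unipotent triangular action (`gᵢ` fixes `Y` and sends `X` to `X - μᵢY`, where the `μᵢ` are
`𝔽_p`-linearly independent), for every `n ≥ p^s` there is an isomorphism of `kH`-modules
`Sⁿ(V^#) ≅ kH ⊕ S^{n-p^s}(V^#)`.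

Here the isomorphism is formalized as a `k`-linear equivalence
`Sⁿ(V^#) ≃ ((ℤ/p)^s → k) × S^{n-p^s}(V^#)` (the regular representation `kH` being realized as
functions `(ℤ/p)^s → k`, on which the `i`-th generator acts by translating the argument by the
`i`-th basis vector) which commutes with the actions of the generators `g₁, …, g_s` of `H`. -/
theorem symmetric_power_splits (p : ℕ) [Fact p.Prime] (hp : Odd p)
    (k : Type*) [Field k] [CharP k p] (s : ℕ) (hs : 1 ≤ s) (μ : Fin s → k)
    (hμ : ∀ c : Fin s → ZMod p,
      ∑ i, ZMod.castHom (dvd_refl p) k (c i) * μ i = 0 → c = 0)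
    (n : ℕ) (hn : p ^ s ≤ n) :
    ∃ e : homogeneousSubmodule (Fin 2) k n ≃ₗ[k]
        ((Fin s → ZMod p) → k) × homogeneousSubmodule (Fin 2) k (n - p ^ s),
      ∀ i : Fin s, ∀ f g : homogeneousSubmodule (Fin 2) k n,
        substAct k (μ i) (f : MvPolynomial (Fin 2) k) = (g : MvPolynomial (Fin 2) k) →
          ((e g).1 = fun x => (e f).1 (x - Pi.single i 1)) ∧
          ((e g).2 : MvPolynomial (Fin 2) k) =
            substAct k (μ i) ((e f).2 : MvPolynomial (Fin 2) k) :=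
  symmetric_power_splits_general p k s μ hμ n hn
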